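/- For all integers j, j₀ with 0 ≤ j ≤ j₀ - 1 ≤ k - 2 one has (1 + (t_{j+1} + t_{j₀})/2)/(1 + t_{j+1}) ≤ (π²/8)·j₀²/(j+1)². -/

import Mathlib

open Real MeasureTheory Set

/-!
Write `V(x) = ∫_{-1}^x g(s)/√(1-s²) ds` and `A(x) = ∫_{-1}^x ds/√(1-s²) = arcsin x + π/2`.
Since `g` is increasing, `V/A` is increasing, so for `x = t_{j+1} ≤ y = t_{j₀}` the quantile
condition `V(t_j) = jπ/k` gives `(j+1) A(y) ≤ j₀ A(x)`. Writing `1 + x = 2 sin²(A(x)/2)` and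
using that `sin θ / θ` decreases on `(0, π]` yields `(1+y)/(1+x) ≤ (A(y)/A(x))² ≤ j₀²/(j+1)²`,
and the claimed bound follows from `π² ≥ 8`.
-/

theorem mul_sin_le_mul_sin {u v : ℝ} (hu : 0 < u) (huv : u ≤ v) (hv : v ≤ π) :
    u * sin v ≤ v * sin u := by
  rcases huv.eq_or_lt with rfl | huv
  · exact le_rfl
  have hv₀ : 0 < v := hu.trans huv
  have h := strictConcaveOn_sin_Icc.secant_strict_mono (a := 0) ⟨le_rfl, pi_pos.le⟩
    ⟨hu.le, huv.le.trans hv⟩ ⟨hv₀.le, hv⟩ hu.ne' hv₀.ne' huv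
  simp only [sin_zero, sub_zero] at h
  rw [div_lt_div_iff₀ hv₀ hu] at h
  linarith

theorem one_add_eq_two_mul_sin_sq {x : ℝ} (hx₁ : -1 ≤ x) (hx₂ : x ≤ 1) :
    1 + x = 2 * sin ((arcsin x + π / 2) / 2) ^ 2 := by
  have h := cos_two_mul_eq_one_sub ((arcsin x + π / 2) / 2)
  rw [mul_div_cancel₀ _ two_ne_zero, cos_add_pi_div_two, sin_arcsin hx₁ hx₂] at h
  linarith

theorem one_add_mul_sq_le_one_add_mul_sq {x y : ℝ} (hx : -1 < x) (hxy : x ≤ y) (hy : y ≤ 1) :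
    (1 + y) * (arcsin x + π / 2) ^ 2 ≤ (1 + x) * (arcsin y + π / 2) ^ 2 := by
  have hx₀ := neg_pi_div_two_lt_arcsin.2 hx
  have hxy' := monotone_arcsin hxy
  have hy₁ := arcsin_le_pi_div_two y
  have hsin := mul_sin_le_mul_sin (u := (arcsin x + π / 2) / 2) (v := (arcsin y + π / 2) / 2)
    (by linarith) (by linarith) (by linarith [pi_pos])
  have hsin_nonneg : 0 ≤ sin ((arcsin y + π / 2) / 2) :=
    sin_nonneg_of_nonneg_of_le_pi (by linarith) (by linarith [pi_pos])
  have hsq := pow_le_pow_left₀ (mul_nonneg (by linarith) hsin_nonneg) hsin 2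
  rw [one_add_eq_two_mul_sin_sq hx.le (hxy.trans hy), one_add_eq_two_mul_sin_sq (by linarith) hy]
  linarith

theorem intervalIntegrable_one_div_sqrt_one_sub_sq {a b : ℝ} (ha : -1 ≤ a) (hab : a ≤ b)
    (hb : b ≤ 1) : IntervalIntegrable (fun s => 1 / √(1 - s ^ 2)) volume a b := by
  rw [intervalIntegrable_iff_integrableOn_Ioc_of_le hab]
  exact intervalIntegral.integrableOn_deriv_of_nonneg continuous_arcsin.continuousOn
    (fun s hs => hasDerivAt_arcsin (by linarith [hs.1]) (by linarith [hs.2]))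
    (fun s _ => by positivity)

theorem integral_one_div_sqrt_one_sub_sq {a b : ℝ} (ha : -1 ≤ a) (hab : a ≤ b) (hb : b ≤ 1) :
    ∫ s in a..b, 1 / √(1 - s ^ 2) = arcsin b - arcsin a :=
  intervalIntegral.integral_eq_sub_of_hasDerivAt_of_le hab continuous_arcsin.continuousOn
    (fun s hs => hasDerivAt_arcsin (by linarith [hs.1]) (by linarith [hs.2]))
    (intervalIntegrable_one_div_sqrt_one_sub_sq ha hab hb)

theorem integral_mul_mul_integral_le_of_monotoneOn {f w : ℝ → ℝ} {a x y : ℝ} (hax : a ≤ x)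
    (hxy : x ≤ y) (hf : MonotoneOn f (Icc a y)) (hw : ∀ s ∈ Icc a y, 0 ≤ w s)
    (hfw : IntervalIntegrable (fun s => f s * w s) volume a y)
    (hwi : IntervalIntegrable w volume a y) :
    (∫ s in a..x, f s * w s) * ∫ s in a..y, w s ≤ (∫ s in a..y, f s * w s) * ∫ s in a..x, w s := by
  have hsub₁ : uIcc a x ⊆ uIcc a y := uIcc_subset_uIcc_left (mem_uIcc_of_le hax hxy)
  have hsub₂ : uIcc x y ⊆ uIcc a y := uIcc_subset_uIcc_right (mem_uIcc_of_le hax hxy)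
  have hx : x ∈ Icc a y := ⟨hax, hxy⟩
  have hI : ∫ s in a..x, f s * w s ≤ f x * ∫ s in a..x, w s := by
    rw [← intervalIntegral.integral_const_mul]
    exact intervalIntegral.integral_mono_on hax (hfw.mono_set hsub₁)
      ((hwi.mono_set hsub₁).const_mul _) fun s hs => mul_le_mul_of_nonneg_right
        (hf ⟨hs.1, hs.2.trans hxy⟩ hx hs.2) (hw s ⟨hs.1, hs.2.trans hxy⟩)
  have hJ : f x * ∫ s in x..y, w s ≤ ∫ s in x..y, f s * w s := by
    rw [← intervalIntegral.integral_const_mul]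
    exact intervalIntegral.integral_mono_on hxy ((hwi.mono_set hsub₂).const_mul _)
      (hfw.mono_set hsub₂) fun s hs => mul_le_mul_of_nonneg_right
        (hf hx ⟨hax.trans hs.1, hs.2⟩ hs.1) (hw s ⟨hax.trans hs.1, hs.2⟩)
  have hA : 0 ≤ ∫ s in a..x, w s :=
    intervalIntegral.integral_nonneg hax fun s hs => hw s ⟨hs.1, hs.2.trans hxy⟩
  have hB : 0 ≤ ∫ s in x..y, w s :=
    intervalIntegral.integral_nonneg hxy fun s hs => hw s ⟨hax.trans hs.1, hs.2⟩
  rw [← intervalIntegral.integral_add_adjacent_intervals (hwi.mono_set hsub₁)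
      (hwi.mono_set hsub₂),
    ← intervalIntegral.integral_add_adjacent_intervals (hfw.mono_set hsub₁)
      (hfw.mono_set hsub₂)]
  linarith [mul_le_mul_of_nonneg_right hI hB, mul_le_mul_of_nonneg_left hJ hA]

theorem one_add_mul_sq_le_of_mul_le {x y P Q : ℝ} (hx : -1 < x) (hxy : x ≤ y) (hy : y ≤ 1)
    (hP : 0 ≤ P) (h : P * (arcsin y + π / 2) ≤ Q * (arcsin x + π / 2)) :
    (1 + y) * P ^ 2 ≤ (1 + x) * Q ^ 2 := by
  have hθx : 0 < arcsin x + π / 2 := by linarith [neg_pi_div_two_lt_arcsin.2 hx]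
  have hθy : 0 ≤ arcsin y + π / 2 := by linarith [monotone_arcsin hxy]
  have hsq := pow_le_pow_left₀ (mul_nonneg hP hθy) h 2
  have := one_add_mul_sq_le_one_add_mul_sq hx hxy hy
  refine le_of_mul_le_mul_right ?_ (pow_pos hθx 2)
  linarith [mul_le_mul_of_nonneg_left this (sq_nonneg P),
    mul_le_mul_of_nonneg_left hsq (by linarith : (0:ℝ) ≤ 1 + x)]

theorem one_add_midpoint_div_le {x y P Q : ℝ} (hx : -1 < x) (hP : 0 < P) (hPQ : P ≤ Q)
    (h : (1 + y) * P ^ 2 ≤ (1 + x) * Q ^ 2) :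
    (1 + (x + y) / 2) / (1 + x) ≤ π ^ 2 / 8 * Q ^ 2 / P ^ 2 := by
  have hπ : 8 ≤ π ^ 2 := by nlinarith [pi_gt_three]
  have hPQ₂ : P ^ 2 ≤ Q ^ 2 := pow_le_pow_left₀ hP.le hPQ 2
  rw [div_le_div_iff₀ (by linarith) (by positivity)]
  linarith [mul_le_mul_of_nonneg_left hPQ₂ (by linarith : (0:ℝ) ≤ 1 + x),
    mul_le_mul_of_nonneg_right hπ (mul_nonneg (by linarith : (0:ℝ) ≤ 1 + x) (sq_nonneg Q))]

theorem stmt_14_general (k : ℕ) (g : ℝ → ℝ)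
    (hgmono : MonotoneOn g (Set.Icc (-1:ℝ) 1))
    (t : ℕ → ℝ)
    (ht0 : t 0 = -1)
    (htmem : ∀ j ≤ k, t j ∈ Set.Icc (-1:ℝ) 1)
    (htmono : ∀ i j : ℕ, i < j → j ≤ k → t i < t j)
    (htW : ∀ j ≤ k,
      ((k : ℝ) / π) * ∫ s in (-1:ℝ)..(t j), g s / Real.sqrt (1 - s ^ 2) = (j : ℝ))
    :
    ∀ j j₀ : ℕ, j + 1 ≤ j₀ → j₀ + 1 ≤ k →
      (1 + (t (j + 1) + t j₀) / 2) / (1 + t (j + 1)) ≤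
        (π ^ 2 / 8) * (j₀ : ℝ) ^ 2 / ((j : ℝ) + 1) ^ 2 := by
  intro j j₀ hj hj₀
  have hx : -1 < t (j + 1) := ht0 ▸ htmono 0 (j + 1) (by omega) (by omega)
  have hxy : t (j + 1) ≤ t j₀ := by
    rcases hj.eq_or_lt with h | h
    · rw [h]
    · exact (htmono _ _ h (by omega)).le
  have hy := htmem j₀ (by omega)
  have hWx := htW (j + 1) (by omega)
  have hWy := htW j₀ (by omega)
  have hint : IntervalIntegrable (fun s => g s * (1 / √(1 - s ^ 2))) volume (-1) (t j₀) := by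
    -- otherwise the integral in `htW j₀` would be the junk value `0 ≠ j₀`
    by_contra h
    simp only [mul_one_div] at h
    rw [intervalIntegral.integral_undef h, mul_zero] at hWy
    norm_cast at hWy
    omega
  have hratio := integral_mul_mul_integral_le_of_monotoneOn hx.le hxy
    (hgmono.mono (Icc_subset_Icc le_rfl hy.2)) (fun s _ => by positivity) hint
    (intervalIntegrable_one_div_sqrt_one_sub_sq le_rfl (by linarith) hy.2)
  simp only [mul_one_div] at hratio
  rw [integral_one_div_sqrt_one_sub_sq le_rfl (by linarith) hy.2,
    integral_one_div_sqrt_one_sub_sq le_rfl hx.le (hxy.trans hy.2), arcsin_neg_one,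
    sub_neg_eq_add, sub_neg_eq_add] at hratio
  have hquantile :
      ((j : ℝ) + 1) * (arcsin (t j₀) + π / 2) ≤ j₀ * (arcsin (t (j + 1)) + π / 2) := by
    have hk : 0 < (k : ℝ) / π := div_pos (by exact_mod_cast (by omega : 0 < k)) pi_pos
    have := mul_le_mul_of_nonneg_left hratio hk.le
    rwa [← mul_assoc, ← mul_assoc, hWx, hWy, Nat.cast_succ] at this
  exact one_add_midpoint_div_le hx (by positivity) (by exact_mod_cast hj)
    (one_add_mul_sq_le_of_mul_le hx hxy hy.2 (by positivity) hquantile)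

theorem stmt_14 (k : ℕ) (hk : 2 ≤ k) (g : ℝ → ℝ)
    (hg0 : ∀ x ∈ Set.Icc (-1:ℝ) 1, 0 ≤ g x)
    (hgmono : MonotoneOn g (Set.Icc (-1:ℝ) 1))
    (hgconc : ConcaveOn ℝ (Set.Icc (-1:ℝ) 1) g)
    (hgconv : ConvexOn ℝ (Set.Ioo (-1:ℝ) 1) (fun s => g s / (1 + s)))
    (hnorm : (1 / π) * ∫ s in (-1:ℝ)..1, g s / Real.sqrt (1 - s ^ 2) = 1)
    (t : ℕ → ℝ)
    (ht0 : t 0 = -1) (htk : t k = 1)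
    (htmem : ∀ j ≤ k, t j ∈ Set.Icc (-1:ℝ) 1)
    (htmono : ∀ i j : ℕ, i < j → j ≤ k → t i < t j)
    (htW : ∀ j ≤ k,
      ((k : ℝ) / π) * ∫ s in (-1:ℝ)..(t j), g s / Real.sqrt (1 - s ^ 2) = (j : ℝ))
    :
    ∀ j j₀ : ℕ, j + 1 ≤ j₀ → j₀ + 1 ≤ k →
      (1 + (t (j + 1) + t j₀) / 2) / (1 + t (j + 1)) ≤
        (π ^ 2 / 8) * (j₀ : ℝ) ^ 2 / ((j : ℝ) + 1) ^ 2 :=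
  stmt_14_general k g hgmono t ht0 htmem htmono htW
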